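/- Let $g_1, \ldots, g_{k}$ be holomorphic functions on a domain $U \subseteq \mathbb{C}$ whose Wronskian $W(g_1, \ldots, g_k) = \det\left(g_j^{(i)}\right)_{0 \leq i \leq k-1,\, 1 \leq j \leq k}$ is not identically zero, and let $M \geq k - 1$ be an integer. Fix $a \in U$. Then for every bijection $\alpha : \{1, \ldots, k\} \to \{0, \ldots, k-1\}$, the order of vanishing of $W(g_1, \ldots, g_k)$ at $a$ is at least $\sum_{j=1}^{k} \max\{0,\; \operatorname{ord}_a(g_j) - (k-1)\}$, and consequently $\operatorname{ord}_a W(g_1,\ldots,g_k) \geq \sum_{j=1}^{k} \operatorname{ord}_a(g_j) - \binom{k}{2}$. -/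

import Mathlib

open Filter Topology

namespace Stmt8Aux

/-- `f` vanishes to order at least `n` at `a`, in factorization form. -/
def P (a : ℂ) (n : ℕ) (f : ℂ → ℂ) : Prop :=
  ∃ h : ℂ → ℂ, AnalyticAt ℂ h a ∧ ∀ᶠ z in 𝓝 a, f z = (z - a) ^ n * h z

lemma analyticAt_deriv' {f : ℂ → ℂ} {a : ℂ} (h : AnalyticAt ℂ f a) :
    AnalyticAt ℂ (deriv f) a := by
  obtain ⟨s, hs, hfs⟩ := h.exists_mem_nhds_analyticOnNhd
  exact hfs.deriv a (mem_of_mem_nhds hs)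

lemma P_mono {a : ℂ} {m n : ℕ} (hmn : m ≤ n) {f : ℂ → ℂ} (h : P a n f) : P a m f := by
  obtain ⟨h₀, hh, heq⟩ := h
  refine ⟨fun z => (z - a) ^ (n - m) * h₀ z,
    (((analyticAt_id.sub analyticAt_const).pow _).mul hh), ?_⟩
  filter_upwards [heq] with z hz
  rw [hz, ← mul_assoc, ← pow_add, Nat.add_sub_cancel' hmn]

lemma P_mul {a : ℂ} {n m : ℕ} {f g : ℂ → ℂ} (hf : P a n f) (hg : P a m g) :
    P a (n + m) (fun z => f z * g z) := by
  obtain ⟨h₁, hh₁, he₁⟩ := hf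
  obtain ⟨h₂, hh₂, he₂⟩ := hg
  refine ⟨fun z => h₁ z * h₂ z, hh₁.mul hh₂, ?_⟩
  filter_upwards [he₁, he₂] with z hz₁ hz₂
  rw [hz₁, hz₂, pow_add]; ring

lemma P_one {a : ℂ} : P a 0 (fun _ => (1 : ℂ)) :=
  ⟨fun _ => 1, analyticAt_const, by filter_upwards with z; simp⟩

lemma P_zero_fun {a : ℂ} {n : ℕ} : P a n (fun _ => (0 : ℂ)) :=
  ⟨fun _ => 0, analyticAt_const, by filter_upwards with z; simp⟩

lemma P_const_mul {a : ℂ} {n : ℕ} (c : ℂ) {f : ℂ → ℂ} (h : P a n f) :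
    P a n (fun z => c * f z) := by
  obtain ⟨h₀, hh, heq⟩ := h
  refine ⟨fun z => c * h₀ z, analyticAt_const.mul hh, ?_⟩
  filter_upwards [heq] with z hz
  rw [hz]; ring

lemma P_sum {a : ℂ} {n : ℕ} {ι : Type*} (s : Finset ι) (f : ι → ℂ → ℂ)
    (hf : ∀ i ∈ s, P a n (f i)) : P a n (fun z => ∑ i ∈ s, f i z) := by
  classical
  induction s using Finset.induction with
  | empty => simpa using P_zero_fun
  | @insert b t hi ih =>
    simp only [Finset.sum_insert hi]
    obtain ⟨h₁, hh₁, he₁⟩ := hf b (Finset.mem_insert_self b t)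
    obtain ⟨h₂, hh₂, he₂⟩ := ih fun i hi => hf i (Finset.mem_insert_of_mem hi)
    refine ⟨fun z => h₁ z + h₂ z, hh₁.add hh₂, ?_⟩
    filter_upwards [he₁, he₂] with z hz₁ hz₂
    rw [hz₁, hz₂]; ring

lemma P_prod {a : ℂ} {ι : Type*} (s : Finset ι) (f : ι → ℂ → ℂ) (n : ι → ℕ)
    (hf : ∀ i ∈ s, P a (n i) (f i)) :
    P a (∑ i ∈ s, n i) (fun z => ∏ i ∈ s, f i z) := by
  classical
  induction s using Finset.induction with
  | empty => simpa using P_one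
  | @insert b t hi ih =>
    simp only [Finset.prod_insert hi, Finset.sum_insert hi]
    exact P_mul (hf b (Finset.mem_insert_self b t))
      (ih fun i hi => hf i (Finset.mem_insert_of_mem hi))

lemma P_deriv {a : ℂ} {n : ℕ} {f : ℂ → ℂ} (h : P a (n + 1) f) : P a n (deriv f) := by
  obtain ⟨h₀, hh, heq⟩ := h
  refine ⟨fun z => ((n : ℂ) + 1) * h₀ z + (z - a) * deriv h₀ z,
    (analyticAt_const.mul hh).add
      ((analyticAt_id.sub analyticAt_const).mul (analyticAt_deriv' hh)), ?_⟩
  have hd : deriv f =ᶠ[𝓝 a] deriv (fun z => (z - a) ^ (n + 1) * h₀ z) :=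
    Filter.EventuallyEq.deriv heq
  filter_upwards [hd, hh.eventually_analyticAt] with z hz hz2
  rw [hz]
  have h1 : HasDerivAt (fun z => (z - a) ^ (n + 1)) (((n : ℂ) + 1) * (z - a) ^ n) z := by
    have := ((hasDerivAt_id z).sub_const a).fun_pow (n + 1)
    simpa [mul_comm] using this
  have h2 : HasDerivAt h₀ (deriv h₀ z) z := hz2.differentiableAt.hasDerivAt
  rw [(h1.fun_mul h2).deriv]
  ring

lemma P_pred {a : ℂ} {n : ℕ} {f : ℂ → ℂ} (h : P a n f) : P a (n - 1) (deriv f) := by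
  cases n with
  | zero =>
    obtain ⟨h₀, hh, heq⟩ := h
    have heq' : f =ᶠ[𝓝 a] h₀ := by filter_upwards [heq] with z hz; simpa using hz
    refine ⟨deriv h₀, analyticAt_deriv' hh, ?_⟩
    filter_upwards [Filter.EventuallyEq.deriv heq'] with z hz
    simpa using hz
  | succ n => simpa using P_deriv h

lemma P_iteratedDeriv {a : ℂ} {f : ℂ → ℂ} {n : ℕ} (h : P a n f) (i : ℕ) :
    P a (n - i) (iteratedDeriv i f) := by
  induction i with
  | zero => simpa [iteratedDeriv_zero] using h
  | succ i ih =>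
    rw [iteratedDeriv_succ]
    have := P_pred ih
    rwa [Nat.sub_sub] at this

lemma P_order_le {a : ℂ} {f : ℂ → ℂ} (hf : AnalyticAt ℂ f a) {n : ℕ} (h : P a n f) :
    (n : ℕ∞) ≤ analyticOrderAt f a := by
  obtain ⟨h₀, hh, heq⟩ := h
  rcases eq_or_ne (analyticOrderAt h₀ a) ⊤ with ht | ht
  · have : analyticOrderAt f a = ⊤ := by
      rw [analyticOrderAt_eq_top]
      rw [analyticOrderAt_eq_top] at ht
      filter_upwards [heq, ht] with z h1 h2
      simp [h1, h2]
    simp [this]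
  · obtain ⟨m, hm⟩ := WithTop.ne_top_iff_exists.mp ht
    obtain ⟨u, hu, hu0, hueq⟩ := (hh.analyticOrderAt_eq_natCast (n := m)).mp hm.symm
    have : analyticOrderAt f a = ((n + m : ℕ) : ℕ∞) := by
      rw [hf.analyticOrderAt_eq_natCast]
      refine ⟨u, hu, hu0, ?_⟩
      filter_upwards [heq, hueq] with z h1 h2
      rw [h1, h2]
      simp [smul_eq_mul, pow_add]
      ring
    rw [this]
    exact_mod_cast Nat.le_add_right n m

lemma P_of_order {a : ℂ} {f : ℂ → ℂ} (hf : AnalyticAt ℂ f a) {n : ℕ}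
    (h : analyticOrderAt f a = (n : ℕ∞)) : P a n f := by
  obtain ⟨u, hu, _, hueq⟩ := (hf.analyticOrderAt_eq_natCast (n := n)).mp h
  exact ⟨u, hu, by filter_upwards [hueq] with z hz; simpa [smul_eq_mul] using hz⟩

end Stmt8Aux

open Stmt8Aux

/-- the Wronskian vanishing-order estimate underlying Theorem 2.4. -/
theorem stmt8 (k : ℕ) (hk : 0 < k) (U : Set ℂ) (hU : IsOpen U) (hUc : IsPreconnected U)
    (g : Fin k → ℂ → ℂ) (hg : ∀ j, DifferentiableOn ℂ (g j) U)
    (hg0 : ∀ j, ∃ z ∈ U, g j z ≠ 0)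
    (M : ℕ) (hM : k - 1 ≤ M) (a : ℂ) (ha : a ∈ U)
    (W : ℂ → ℂ)
    (hW : W = fun z => Matrix.det (Matrix.of fun i j : Fin k => iteratedDeriv (i:ℕ) (g j) z))
    (hWne : ∃ z ∈ U, W z ≠ 0)
    (hWa : AnalyticAt ℂ W a) (hga : ∀ j, AnalyticAt ℂ (g j) a) :
    (∀ _α : Equiv.Perm (Fin k),
        analyticOrderAt W a ≥ ∑ j, (analyticOrderAt (g j) a - ((k:ℕ∞) - 1)))
    ∧ analyticOrderAt W a + (Nat.choose k 2 : ℕ∞) ≥ ∑ j, analyticOrderAt (g j) a := by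
  classical
  -- Each g j has finite order at a
  have hfin : ∀ j, analyticOrderAt (g j) a ≠ ⊤ := by
    intro j ht
    rw [analyticOrderAt_eq_top] at ht
    have hAn : AnalyticOnNhd ℂ (g j) U := (hg j).analyticOnNhd hU
    have hzero : Set.EqOn (g j) 0 U :=
      hAn.eqOn_zero_of_preconnected_of_eventuallyEq_zero hUc ha ht
    obtain ⟨z, hz, hz0⟩ := hg0 j
    exact hz0 (hzero hz)
  set n : Fin k → ℕ := fun j => (analyticOrderAt (g j) a).toNat with hn
  have hnj : ∀ j, analyticOrderAt (g j) a = ((n j : ℕ) : ℕ∞) := fun j =>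
    (ENat.coe_toNat (hfin j)).symm
  -- factorization of each g j
  have hPg : ∀ j, P a (n j) (g j) := fun j => P_of_order (hga j) (hnj j)
  -- factorization of iterated derivatives
  have hPitd : ∀ (j : Fin k) (i : ℕ), P a (n j - i) (iteratedDeriv i (g j)) :=
    fun j i => P_iteratedDeriv (hPg j) i
  -- W as a sum over permutations
  have hWsum : W = fun z => ∑ σ : Equiv.Perm (Fin k),
      ((Equiv.Perm.sign σ : ℤ) : ℂ) * ∏ i : Fin k, iteratedDeriv ((σ i : Fin k) : ℕ) (g i) z := by
    rw [hW]
    funext z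
    rw [Matrix.det_apply]
    refine Finset.sum_congr rfl fun σ _ => ?_
    rw [Units.smul_def, zsmul_eq_mul]
    rfl
  set S : Equiv.Perm (Fin k) → ℕ := fun σ => ∑ j : Fin k, (n j - (σ j : ℕ)) with hS
  -- the minimum over permutations
  have hne : (Finset.univ : Finset (Equiv.Perm (Fin k))).Nonempty := Finset.univ_nonempty
  set Q : ℕ := Finset.univ.inf' hne S with hQ
  have hQle : ∀ σ : Equiv.Perm (Fin k), Q ≤ S σ := fun σ =>
    Finset.inf'_le S (Finset.mem_univ σ)
  -- each term of the determinant vanishes to order at least S σ, hence at least Q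
  have hPW : P a Q W := by
    rw [hWsum]
    refine P_sum Finset.univ _ fun σ _ => ?_
    refine P_mono (hQle σ) ?_
    refine P_const_mul _ ?_
    exact P_prod Finset.univ _ _ fun i _ => hPitd i ((σ i : Fin k) : ℕ)
  have hordW : (Q : ℕ∞) ≤ analyticOrderAt W a := P_order_le hWa hPW
  -- sum of indices of a permutation is `k.choose 2`
  have hsumperm : ∀ σ : Equiv.Perm (Fin k), ∑ j : Fin k, ((σ j : Fin k) : ℕ) = k.choose 2 := by
    intro σ
    rw [Equiv.sum_comp σ (fun j : Fin k => (j : ℕ))]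
    rw [Fin.sum_univ_eq_sum_range (fun i => i) k, Finset.sum_range_id, Nat.choose_two_right]
  constructor
  · intro _α
    -- part 1: order ≥ ∑ (n j - (k-1))
    have hNQ : ∑ j : Fin k, (n j - (k - 1)) ≤ Q := by
      rw [hQ, Finset.le_inf'_iff]
      intro σ _
      refine Finset.sum_le_sum fun j _ => ?_
      exact Nat.sub_le_sub_left (Nat.le_sub_one_of_lt (σ j).2) (n j)
    have hcast : ∑ j, (analyticOrderAt (g j) a - ((k:ℕ∞) - 1)) =
        ((∑ j : Fin k, (n j - (k - 1)) : ℕ) : ℕ∞) := by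
      rw [Nat.cast_sum]
      refine Finset.sum_congr rfl fun j _ => ?_
      rw [hnj j, ENat.coe_sub, ENat.coe_sub, Nat.cast_one]
    rw [hcast]
    calc ((∑ j : Fin k, (n j - (k - 1)) : ℕ) : ℕ∞) ≤ (Q : ℕ∞) := by exact_mod_cast hNQ
      _ ≤ analyticOrderAt W a := hordW
  · -- part 2
    obtain ⟨σ₀, _, hσ₀⟩ := Finset.exists_mem_eq_inf' hne S
    have hT : ∑ j : Fin k, n j ≤ Q + k.choose 2 := by
      rw [hQ, hσ₀, ← hsumperm σ₀]
      simp only [hS]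
      rw [← Finset.sum_add_distrib]
      exact Finset.sum_le_sum fun j _ => le_tsub_add
    have hcast : ∑ j, analyticOrderAt (g j) a = ((∑ j : Fin k, n j : ℕ) : ℕ∞) := by
      rw [Nat.cast_sum]
      exact Finset.sum_congr rfl fun j _ => hnj j
    rw [hcast]
    calc ((∑ j : Fin k, n j : ℕ) : ℕ∞) ≤ ((Q + k.choose 2 : ℕ) : ℕ∞) := by exact_mod_cast hT
      _ = (Q : ℕ∞) + (k.choose 2 : ℕ∞) := by push_cast; rfl
      _ ≤ analyticOrderAt W a + (k.choose 2 : ℕ∞) := add_le_add_left hordW _
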